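/- arXiv:2502.05059 — 4 statements merged into one kernel-verified Lean document; each statement's English description precedes it below -/
import Mathlib

section
/- Let T be a finite tree with root r and let S ⊆ V(T) ∖ {r} have characteristic (α, β) in (T, r). Then T − S has a unique minimum vertex cover if and only if either (α(0) < α(1) + 1 and β(0) = 1) or (α(1) + 1 < α(0) and β(1) = 1). -/
open Finset

variable {V : Type*}

/-- `M` is a vertex cover of `(T with vertex set A) − S`: `M ⊆ A \ S` and every
edge of `T` with both endpoints outside `S` has an endpoint in `M`. -/
def IsVCDel [DecidableEq V] (T : SimpleGraph V) (A S M : Finset V) : Prop :=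
  M ⊆ A \ S ∧ ∀ ⦃u v : V⦄, T.Adj u v → u ∉ S → v ∉ S → u ∈ M ∨ v ∈ M

/-- A vertex cover of type `i ∈ {0,1}` of `(T with vertex set A) − S`, relative
to the root `r`: type 1 covers contain `r`, type 0 covers do not. -/
def IsTypedVC [DecidableEq V] (T : SimpleGraph V) (A S : Finset V) (r : V) (i : Fin 2)
    (M : Finset V) : Prop :=
  IsVCDel T A S M ∧ (i = 1 ↔ r ∈ M)

/-- `(α, β)` is the characteristic of `S` in the rooted tree `(T, A, r)`:
for each `i ∈ {0,1}`, `α i` is the minimum reduced size `|M \ {r}|` of a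
vertex cover `M` of type `i` of `T − S`, and `β i = 1` iff there is exactly one
vertex cover of type `i` with reduced size `α i` (and `β i = 2` otherwise). -/
def IsCharacteristic [DecidableEq V] (T : SimpleGraph V) (A S : Finset V) (r : V)
    (α β : Fin 2 → ℕ) : Prop :=
  ∀ i : Fin 2,
    (∃ M, IsTypedVC T A S r i M ∧ (M.erase r).card = α i) ∧
    (∀ M, IsTypedVC T A S r i M → α i ≤ (M.erase r).card) ∧
    (β i = 1 ∨ β i = 2) ∧
    (β i = 1 ↔ ∃! M, IsTypedVC T A S r i M ∧ (M.erase r).card = α i)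

/-- `(T, A, r)` is a finite rooted tree: the root `r` lies in the vertex set `A`,
all edges of `T` are inside `A`, and the induced graph on `A` is a tree. -/
def IsRootedTree [DecidableEq V] (T : SimpleGraph V) (A : Finset V) (r : V) : Prop :=
  r ∈ A ∧ (∀ ⦃u v : V⦄, T.Adj u v → u ∈ A ∧ v ∈ A) ∧
    (SimpleGraph.induce (↑A : Set V) T).IsTree

/-- `(T with vertex set A) − S` has a unique minimum vertex cover. -/
def HasUniqueMinVC [DecidableEq V] (T : SimpleGraph V) (A S : Finset V) : Prop :=
  ∃! M : Finset V, IsVCDel T A S M ∧ ∀ M', IsVCDel T A S M' → M.card ≤ M'.card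

/-!
A vertex cover of `T − S` has type 0 or 1, and its size is its reduced size plus its type. Hence
the minimum vertex covers of `T − S` are the minimum covers of the type whose value among
`α 0` and `α 1 + 1` is smaller; if the two values tie, each type supplies a minimum cover and
uniqueness fails.
-/

theorem isMinOn_union_iff_of_lt {α β : Type*} [LinearOrder β] {f : α → β} {s t : Set α}
    {a b x : α} (ha : a ∈ s) (hfb : IsMinOn f t b) (hab : f a < f b) :
    x ∈ s ∪ t ∧ IsMinOn f (s ∪ t) x ↔ x ∈ s ∧ IsMinOn f s x := by
  constructor
  · rintro ⟨hx | hx, hmin⟩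
    · exact ⟨hx, hmin.on_subset Set.subset_union_left⟩
    · exact absurd (hmin (Or.inl ha)) (not_le.2 (hab.trans_le (hfb hx)))
  · rintro ⟨hx, hmin⟩
    refine ⟨Or.inl hx, fun y hy ↦ ?_⟩
    rcases hy with hy | hy
    · exact hmin hy
    · exact (hmin ha).trans (hab.le.trans (hfb hy))

theorem existsUnique_isMinOn_union_iff {α β : Type*} [LinearOrder β] {f : α → β}
    {s t : Set α} (hst : Disjoint s t) {a b : α} (ha : a ∈ s) (hfa : IsMinOn f s a)
    (hb : b ∈ t) (hfb : IsMinOn f t b) :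
    (∃! x, x ∈ s ∪ t ∧ IsMinOn f (s ∪ t) x) ↔
      (f a < f b ∧ ∃! x, x ∈ s ∧ IsMinOn f s x) ∨ (f b < f a ∧ ∃! x, x ∈ t ∧ IsMinOn f t x) := by
  rcases lt_trichotomy (f a) (f b) with hab | hab | hab
  · rw [existsUnique_congr fun _ ↦ isMinOn_union_iff_of_lt ha hfb hab]
    simp [hab, hab.not_gt]
  · have hmin_a : IsMinOn f (s ∪ t) a := fun y hy ↦ hy.elim (hfa ·) (hab.trans_le <| hfb ·)
    have hmin_b : IsMinOn f (s ∪ t) b := fun y hy ↦ hy.elim (hab.symm.trans_le <| hfa ·) (hfb ·)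
    have hne : a ≠ b := fun h ↦ Set.disjoint_left.1 hst ha (h ▸ hb)
    simp only [hab, lt_irrefl, false_and, or_false, iff_false]
    exact fun ⟨_, _, huniq⟩ ↦
      hne ((huniq a ⟨Or.inl ha, hmin_a⟩).trans (huniq b ⟨Or.inr hb, hmin_b⟩).symm)
  · rw [Set.union_comm, existsUnique_congr fun _ ↦ isMinOn_union_iff_of_lt hb hfa hab]
    simp [hab, hab.not_gt]

section TypedCovers

variable [DecidableEq V] {T : SimpleGraph V} {A S : Finset V} {r : V}

variable (T A S r) in
def typedCovers (i : Fin 2) : Set (Finset V) := {M | IsTypedVC T A S r i M}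

theorem IsTypedVC.card_eq {i : Fin 2} {M : Finset V} (h : IsTypedVC T A S r i M) :
    M.card = (M.erase r).card + i := by
  fin_cases i
  · have hr : r ∉ M := fun hr ↦ absurd (h.2.2 hr) (by decide)
    simp [Finset.erase_eq_of_notMem hr]
  · exact (Finset.card_erase_add_one (h.2.1 rfl)).symm

theorem disjoint_typedCovers : Disjoint (typedCovers T A S r 0) (typedCovers T A S r 1) :=
  Set.disjoint_left.2 fun _ h₀ h₁ ↦ absurd (h₀.2.2 (h₁.2.1 rfl)) (by decide)

theorem typedCovers_union :
    typedCovers T A S r 0 ∪ typedCovers T A S r 1 = {M | IsVCDel T A S M} := by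
  ext M
  by_cases hr : r ∈ M <;> simp [typedCovers, IsTypedVC, hr]

theorem hasUniqueMinVC_iff_existsUnique_isMinOn :
    HasUniqueMinVC T A S ↔
      ∃! M, M ∈ {M | IsVCDel T A S M} ∧ IsMinOn Finset.card {M | IsVCDel T A S M} M :=
  Iff.rfl

variable {α β : Fin 2 → ℕ}

theorem IsCharacteristic.isMinOn_card_iff (hchar : IsCharacteristic T A S r α β) {i : Fin 2}
    {M : Finset V} (hM : M ∈ typedCovers T A S r i) :
    IsMinOn Finset.card (typedCovers T A S r i) M ↔ (M.erase r).card = α i := by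
  obtain ⟨⟨M₀, hM₀, hcard₀⟩, hmin, -⟩ := hchar i
  rw [isMinOn_iff]
  constructor
  · intro h
    have := h M₀ hM₀
    rw [hM.card_eq, hM₀.card_eq] at this
    exact le_antisymm (by omega) (hmin M hM)
  · intro h N hN
    rw [hM.card_eq, hN.card_eq, h]
    exact Nat.add_le_add_right (hmin N hN) _

theorem IsCharacteristic.exists_isMinOn_card (hchar : IsCharacteristic T A S r α β)
    (i : Fin 2) :
    ∃ M ∈ typedCovers T A S r i, IsMinOn Finset.card (typedCovers T A S r i) M ∧
      M.card = α i + i := by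
  obtain ⟨⟨M, hM, hcard⟩, -⟩ := hchar i
  exact ⟨M, hM, (hchar.isMinOn_card_iff hM).2 hcard, hcard ▸ hM.card_eq⟩

theorem IsCharacteristic.beta_eq_one_iff (hchar : IsCharacteristic T A S r α β) (i : Fin 2) :
    β i = 1 ↔ ∃! M, M ∈ typedCovers T A S r i ∧ IsMinOn Finset.card (typedCovers T A S r i) M := by
  rw [(hchar i).2.2.2]
  exact existsUnique_congr fun M ↦
    ⟨fun ⟨hM, hcard⟩ ↦ ⟨hM, (hchar.isMinOn_card_iff hM).2 hcard⟩,
      fun ⟨hM, hmin⟩ ↦ ⟨hM, (hchar.isMinOn_card_iff hM).1 hmin⟩⟩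

end TypedCovers

theorem uniqueMinVC_iff_of_char_general [DecidableEq V]
    (T : SimpleGraph V) (A : Finset V) (r : V)
    (S : Finset V)
    (α β : Fin 2 → ℕ) (hchar : IsCharacteristic T A S r α β) :
    HasUniqueMinVC T A S ↔
      (α 0 < α 1 + 1 ∧ β 0 = 1) ∨ (α 1 + 1 < α 0 ∧ β 1 = 1) := by
  obtain ⟨M₀, hM₀, hmin₀, hcard₀⟩ := hchar.exists_isMinOn_card 0
  obtain ⟨M₁, hM₁, hmin₁, hcard₁⟩ := hchar.exists_isMinOn_card 1
  rw [hasUniqueMinVC_iff_existsUnique_isMinOn, ← typedCovers_union,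
    existsUnique_isMinOn_union_iff disjoint_typedCovers hM₀ hmin₀ hM₁ hmin₁, hcard₀, hcard₁,
    hchar.beta_eq_one_iff, hchar.beta_eq_one_iff]
  rfl

/-- For a rooted tree `(T, r)` and `S ⊆ V(T) \ {r}` with characteristic `(α, β)`,
`T − S` has a unique minimum vertex cover iff either `α 0 < α 1 + 1` and `β 0 = 1`,
or `α 1 + 1 < α 0` and `β 1 = 1`. -/
theorem uniqueMinVC_iff_of_char [Fintype V] [DecidableEq V]
    (T : SimpleGraph V) (A : Finset V) (r : V) (hT : IsRootedTree T A r)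
    (S : Finset V) (hS : S ⊆ A.erase r)
    (α β : Fin 2 → ℕ) (hchar : IsCharacteristic T A S r α β) :
    HasUniqueMinVC T A S ↔
      (α 0 < α 1 + 1 ∧ β 0 = 1) ∨ (α 1 + 1 < α 0 ∧ β 1 = 1) :=
  uniqueMinVC_iff_of_char_general T A r S α β hchar
end

section
/- Let (T₁, r) and (T₂, r) be finite rooted trees with V(T₁) ∩ V(T₂) = {r}, and let T be their union (so V(T) = V(T₁) ∪ V(T₂) and E(T) = E(T₁) ∪ E(T₂)), which is a tree rooted at r. Let S₁ ⊆ V(T₁) ∖ {r} have characteristic (α₁, β₁) in (T₁, r) and let S₂ ⊆ V(T₂) ∖ {r} have characteristic (α₂, β₂) in (T₂, r). Then the characteristic (α, β) of S₁ ∪ S₂ in (T, r) satisfies, for each i ∈ {0,1}: α(i) = α₁(i) + α₂(i), and β(i) = 1 if and only if β₁(i) = 1 and β₂(i) = 1. -/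
open Finset

variable {V : Type*}

/-!
Sending a cover `M` of the joined tree to `(M ∩ A₁, M ∩ A₂)` and a pair `(M₁, M₂)` to `M₁ ∪ M₂`
identifies the covers of type `i` of the join with pairs of covers of type `i` of the two halves:
the type is decided by the shared root alone, and no edge or deleted vertex meets both halves.
Since the halves share only the root, the reduced size is additive along this bijection. Minimising
an additive objective over a product, the minimum is the sum of the minima and the minimiser is
unique exactly when both factors have a unique minimiser.
-/

theorem existsUnique_mem_and_iff {α : Type*} {s : Set α} {p : α → Prop} :
    (∃! x, x ∈ s ∧ p x) ↔ ∃! x : s, p x := by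
  simp [ExistsUnique, Subtype.forall, and_assoc, and_left_comm]

theorem existsUnique_prod_and_iff {α β : Type*} {p : α → Prop} {q : β → Prop} :
    (∃! x : α × β, p x.1 ∧ q x.2) ↔ (∃! a, p a) ∧ (∃! b, q b) := by
  constructor
  · rintro ⟨⟨a, b⟩, ⟨ha, hb⟩, huniq⟩
    exact ⟨⟨a, ha, fun a' ha' => congrArg Prod.fst (huniq (a', b) ⟨ha', hb⟩)⟩,
      ⟨b, hb, fun b' hb' => congrArg Prod.snd (huniq (a, b') ⟨ha, hb'⟩)⟩⟩
  · rintro ⟨⟨a, ha, hua⟩, ⟨b, hb, hub⟩⟩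
    exact ⟨(a, b), ⟨ha, hb⟩, fun x hx => Prod.ext (hua _ hx.1) (hub _ hx.2)⟩

section SeparableMinimum

variable {X Y Z M : Type*} [AddCommMonoid M] [PartialOrder M] [IsOrderedCancelAddMonoid M]
  {s : Set X} {s₁ : Set Y} {s₂ : Set Z} {w : X → M} {w₁ : Y → M} {w₂ : Z → M} {a₁ a₂ : M}

theorem isLeast_image_of_equiv_prod (e : s ≃ s₁ × s₂)
    (hw : ∀ x : s, w x = w₁ (e x).1 + w₂ (e x).2)
    (h₁ : IsLeast (w₁ '' s₁) a₁) (h₂ : IsLeast (w₂ '' s₂) a₂) :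
    IsLeast (w '' s) (a₁ + a₂) := by
  obtain ⟨⟨y, hy, rfl⟩, hlow₁⟩ := h₁
  obtain ⟨⟨z, hz, rfl⟩, hlow₂⟩ := h₂
  refine ⟨⟨e.symm (⟨y, hy⟩, ⟨z, hz⟩), Subtype.prop _, by simp [hw]⟩, ?_⟩
  rintro _ ⟨x, hx, rfl⟩
  rw [hw ⟨x, hx⟩]
  exact add_le_add (hlow₁ ⟨_, (e ⟨x, hx⟩).1.2, rfl⟩) (hlow₂ ⟨_, (e ⟨x, hx⟩).2.2, rfl⟩)

theorem eq_add_iff_of_equiv_prod (e : s ≃ s₁ × s₂)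
    (hw : ∀ x : s, w x = w₁ (e x).1 + w₂ (e x).2)
    (h₁ : a₁ ∈ lowerBounds (w₁ '' s₁)) (h₂ : a₂ ∈ lowerBounds (w₂ '' s₂)) (x : s) :
    w x = a₁ + a₂ ↔ w₁ (e x).1 = a₁ ∧ w₂ (e x).2 = a₂ := by
  rw [hw, eq_comm, add_eq_add_iff_eq_and_eq (h₁ ⟨_, (e x).1.2, rfl⟩) (h₂ ⟨_, (e x).2.2, rfl⟩),
    eq_comm, eq_comm (a := a₂)]

theorem existsUnique_iff_of_equiv_prod (e : s ≃ s₁ × s₂)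
    (hw : ∀ x : s, w x = w₁ (e x).1 + w₂ (e x).2)
    (h₁ : a₁ ∈ lowerBounds (w₁ '' s₁)) (h₂ : a₂ ∈ lowerBounds (w₂ '' s₂)) :
    (∃! x, x ∈ s ∧ w x = a₁ + a₂) ↔
      (∃! y, y ∈ s₁ ∧ w₁ y = a₁) ∧ (∃! z, z ∈ s₂ ∧ w₂ z = a₂) := by
  rw [existsUnique_mem_and_iff, existsUnique_mem_and_iff, existsUnique_mem_and_iff,
    ← existsUnique_prod_and_iff]
  exact e.existsUnique_congr (eq_add_iff_of_equiv_prod e hw h₁ h₂)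

end SeparableMinimum

section RootJoin

variable [DecidableEq V] {T₁ T₂ : SimpleGraph V} {A₁ A₂ S₁ S₂ M M₁ M₂ : Finset V} {r : V}
  {α β : Fin 2 → ℕ}

theorem Finset.disjoint_of_subset_erase (hS : S₁ ⊆ A₁.erase r) (hA : A₁ ∩ A₂ ⊆ {r}) :
    Disjoint S₁ A₂ := by
  refine disjoint_left.2 fun x hx₁ hx₂ => ?_
  obtain ⟨hxr, hxA⟩ := mem_erase.1 (hS hx₁)
  exact hxr (mem_singleton.1 (hA (mem_inter.2 ⟨hxA, hx₂⟩)))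

theorem Finset.card_erase_eq_card_erase_inter_add (hA : A₁ ∩ A₂ ⊆ {r}) (hM : M ⊆ A₁ ∪ A₂) :
    (M.erase r).card = ((M ∩ A₁).erase r).card + ((M ∩ A₂).erase r).card := by
  conv_lhs => rw [← inter_eq_left.2 hM, inter_union_distrib_left]
  rw [erase_union_distrib, card_union_of_disjoint]
  refine disjoint_left.2 fun x hx₁ hx₂ => ?_
  obtain ⟨hxr, hx₁⟩ := mem_erase.1 hx₁
  exact hxr (mem_singleton.1
    (hA (mem_inter.2 ⟨(mem_inter.1 hx₁).2, (mem_inter.1 (mem_of_mem_erase hx₂)).2⟩)))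

namespace IsTypedVC

variable {i : Fin 2}

theorem subset (h : IsTypedVC T₁ A₁ S₁ r i M) : M ⊆ A₁ :=
  fun _ hx => (mem_sdiff.1 (h.1.1 hx)).1

theorem inter_left (hr : r ∈ A₁) (hE : ∀ ⦃u v : V⦄, T₁.Adj u v → u ∈ A₁ ∧ v ∈ A₁)
    (hS : Disjoint S₂ A₁) (h : IsTypedVC (T₁ ⊔ T₂) (A₁ ∪ A₂) (S₁ ∪ S₂) r i M) :
    IsTypedVC T₁ A₁ S₁ r i (M ∩ A₁) := by
  obtain ⟨⟨hsub, hcov⟩, htype⟩ := h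
  refine ⟨⟨fun x hx => ?_, fun u v huv hu hv => ?_⟩, by simp [htype, hr]⟩
  · obtain ⟨hxM, hxA⟩ := mem_inter.1 hx
    exact mem_sdiff.2 ⟨hxA, fun hxS => (mem_sdiff.1 (hsub hxM)).2 (mem_union_left _ hxS)⟩
  · obtain ⟨huA, hvA⟩ := hE huv
    rcases hcov (Or.inl huv) (by simp [hu, disjoint_right.1 hS huA])
      (by simp [hv, disjoint_right.1 hS hvA]) with h | h
    · exact Or.inl (mem_inter.2 ⟨h, huA⟩)
    · exact Or.inr (mem_inter.2 ⟨h, hvA⟩)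

theorem inter_right (hr : r ∈ A₂) (hE : ∀ ⦃u v : V⦄, T₂.Adj u v → u ∈ A₂ ∧ v ∈ A₂)
    (hS : Disjoint S₁ A₂) (h : IsTypedVC (T₁ ⊔ T₂) (A₁ ∪ A₂) (S₁ ∪ S₂) r i M) :
    IsTypedVC T₂ A₂ S₂ r i (M ∩ A₂) := by
  rw [sup_comm, union_comm A₁, union_comm S₁] at h
  exact h.inter_left hr hE hS

theorem union (hS₁ : Disjoint S₁ A₂) (hS₂ : Disjoint S₂ A₁) (h₁ : IsTypedVC T₁ A₁ S₁ r i M₁)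
    (h₂ : IsTypedVC T₂ A₂ S₂ r i M₂) :
    IsTypedVC (T₁ ⊔ T₂) (A₁ ∪ A₂) (S₁ ∪ S₂) r i (M₁ ∪ M₂) := by
  obtain ⟨⟨hsub₁, hcov₁⟩, htype₁⟩ := h₁
  obtain ⟨⟨hsub₂, hcov₂⟩, htype₂⟩ := h₂
  refine ⟨⟨union_subset ?_ ?_, ?_⟩, ?_⟩
  · intro x hx
    obtain ⟨hxA, hxS⟩ := mem_sdiff.1 (hsub₁ hx)
    simp [hxA, hxS, disjoint_right.1 hS₂ hxA]
  · intro x hx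
    obtain ⟨hxA, hxS⟩ := mem_sdiff.1 (hsub₂ hx)
    simp [hxA, hxS, disjoint_right.1 hS₁ hxA]
  · rintro u v (huv | huv) hu hv <;> simp only [mem_union, not_or] at hu hv
    · exact (hcov₁ huv hu.1 hv.1).imp (mem_union_left _) (mem_union_left _)
    · exact (hcov₂ huv hu.2 hv.2).imp (mem_union_right _) (mem_union_right _)
  · rw [mem_union, ← htype₁, ← htype₂, or_self]

theorem union_inter_left (hA : A₁ ∩ A₂ ⊆ {r}) (h₁ : IsTypedVC T₁ A₁ S₁ r i M₁)
    (h₂ : IsTypedVC T₂ A₂ S₂ r i M₂) : (M₁ ∪ M₂) ∩ A₁ = M₁ := by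
  rw [union_inter_distrib_right, inter_eq_left.2 h₁.subset, union_eq_left]
  intro x hx
  obtain ⟨hx₂, hx₁⟩ := mem_inter.1 hx
  obtain rfl : x = r := mem_singleton.1 (hA (mem_inter.2 ⟨hx₁, h₂.subset hx₂⟩))
  exact h₁.2.1 (h₂.2.2 hx₂)

theorem union_inter_right (hA : A₁ ∩ A₂ ⊆ {r}) (h₁ : IsTypedVC T₁ A₁ S₁ r i M₁)
    (h₂ : IsTypedVC T₂ A₂ S₂ r i M₂) : (M₁ ∪ M₂) ∩ A₂ = M₂ := by
  rw [union_comm]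
  exact union_inter_left (by rwa [inter_comm]) h₂ h₁

end IsTypedVC

def typedVCSupEquiv (hr₁ : r ∈ A₁) (hr₂ : r ∈ A₂)
    (hE₁ : ∀ ⦃u v : V⦄, T₁.Adj u v → u ∈ A₁ ∧ v ∈ A₁)
    (hE₂ : ∀ ⦃u v : V⦄, T₂.Adj u v → u ∈ A₂ ∧ v ∈ A₂) (hA : A₁ ∩ A₂ ⊆ {r})
    (hS₁ : Disjoint S₁ A₂) (hS₂ : Disjoint S₂ A₁) (i : Fin 2) :
    {M | IsTypedVC (T₁ ⊔ T₂) (A₁ ∪ A₂) (S₁ ∪ S₂) r i M} ≃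
      {M | IsTypedVC T₁ A₁ S₁ r i M} × {M | IsTypedVC T₂ A₂ S₂ r i M} where
  toFun M := (⟨M ∩ A₁, M.2.inter_left hr₁ hE₁ hS₂⟩, ⟨M ∩ A₂, M.2.inter_right hr₂ hE₂ hS₁⟩)
  invFun M := ⟨M.1 ∪ M.2, M.1.2.union hS₁ hS₂ M.2.2⟩
  left_inv M := Subtype.ext <| by
    simp only [← inter_union_distrib_left, inter_eq_left.2 M.2.subset]
  right_inv M := Prod.ext (Subtype.ext (M.1.2.union_inter_left hA M.2.2))
    (Subtype.ext (M.1.2.union_inter_right hA M.2.2))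

theorem IsCharacteristic.isLeast {T : SimpleGraph V} {A S : Finset V}
    (h : IsCharacteristic T A S r α β) (i : Fin 2) :
    IsLeast ((fun M => (M.erase r).card) '' {M | IsTypedVC T A S r i M}) (α i) :=
  ⟨(h i).1, by rintro _ ⟨M, hM, rfl⟩; exact (h i).2.1 M hM⟩

end RootJoin

theorem char_join_general [DecidableEq V]
    (T₁ T₂ : SimpleGraph V) (A₁ A₂ : Finset V) (r : V)
    (hT₁ : IsRootedTree T₁ A₁ r) (hT₂ : IsRootedTree T₂ A₂ r)
    (hInter : A₁ ∩ A₂ = {r})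
    (S₁ S₂ : Finset V) (hS₁ : S₁ ⊆ A₁.erase r) (hS₂ : S₂ ⊆ A₂.erase r)
    (α₁ β₁ α₂ β₂ α β : Fin 2 → ℕ)
    (h₁ : IsCharacteristic T₁ A₁ S₁ r α₁ β₁)
    (h₂ : IsCharacteristic T₂ A₂ S₂ r α₂ β₂)
    (h : IsCharacteristic (T₁ ⊔ T₂) (A₁ ∪ A₂) (S₁ ∪ S₂) r α β) :
    ∀ i : Fin 2, α i = α₁ i + α₂ i ∧ (β i = 1 ↔ β₁ i = 1 ∧ β₂ i = 1) := by
  intro i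
  obtain ⟨hr₁, hE₁, -⟩ := hT₁
  obtain ⟨hr₂, hE₂, -⟩ := hT₂
  have hA : A₁ ∩ A₂ ⊆ {r} := hInter.le
  have hA' : A₂ ∩ A₁ ⊆ {r} := by rwa [inter_comm]
  let e := typedVCSupEquiv hr₁ hr₂ hE₁ hE₂ hA (disjoint_of_subset_erase hS₁ hA)
    (disjoint_of_subset_erase hS₂ hA') i
  have hw : ∀ M : {M | IsTypedVC (T₁ ⊔ T₂) (A₁ ∪ A₂) (S₁ ∪ S₂) r i M},
      ((M : Finset V).erase r).card =
        (((e M).1 : Finset V).erase r).card + (((e M).2 : Finset V).erase r).card :=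
    fun M => card_erase_eq_card_erase_inter_add hA M.2.subset
  have hα : α i = α₁ i + α₂ i :=
    (h.isLeast i).unique (isLeast_image_of_equiv_prod e hw (h₁.isLeast i) (h₂.isLeast i))
  refine ⟨hα, ?_⟩
  rw [(h i).2.2.2, (h₁ i).2.2.2, (h₂ i).2.2.2, hα]
  exact existsUnique_iff_of_equiv_prod e hw (h₁.isLeast i).2 (h₂.isLeast i).2

/-- Join of two rooted trees sharing only the root `r`: the characteristic of
`S₁ ∪ S₂` in the union is obtained componentwise. -/
theorem char_join [Fintype V] [DecidableEq V]
    (T₁ T₂ : SimpleGraph V) (A₁ A₂ : Finset V) (r : V)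
    (hT₁ : IsRootedTree T₁ A₁ r) (hT₂ : IsRootedTree T₂ A₂ r)
    (hInter : A₁ ∩ A₂ = {r})
    (S₁ S₂ : Finset V) (hS₁ : S₁ ⊆ A₁.erase r) (hS₂ : S₂ ⊆ A₂.erase r)
    (α₁ β₁ α₂ β₂ α β : Fin 2 → ℕ)
    (h₁ : IsCharacteristic T₁ A₁ S₁ r α₁ β₁)
    (h₂ : IsCharacteristic T₂ A₂ S₂ r α₂ β₂)
    (h : IsCharacteristic (T₁ ⊔ T₂) (A₁ ∪ A₂) (S₁ ∪ S₂) r α β) :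
    ∀ i : Fin 2, α i = α₁ i + α₂ i ∧ (β i = 1 ↔ β₁ i = 1 ∧ β₂ i = 1) :=
  char_join_general T₁ T₂ A₁ A₂ r hT₁ hT₂ hInter S₁ S₂ hS₁ hS₂ α₁ β₁ α₂ β₂ α β h₁ h₂ h
end

section
/- Let (T', r') be a finite rooted tree, let r ∉ V(T'), and let T be the tree obtained from T' by adding the new vertex r and the edge {r, r'}, rooted at r. Let S ⊆ V(T') ∖ {r'} have characteristic (α', β') in (T', r'). Then the characteristic (α, β) of S in (T, r) satisfies: α(0) = α'(1) + 1; α(1) = min(α'(0), α'(1) + 1); β(0) = β'(1); and β(1) = β'(0) if α'(0) < α'(1) + 1, β(1) = β'(1) if α'(0) > α'(1) + 1, and β(1) = 2 if α'(0) = α'(1) + 1. -/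
open Finset

variable {V : Type*}

/-!
A cover of `T − S` avoiding the new root `r` must contain `r'`, so it is exactly a type-1 cover
of `T' − S`, whose reduced size in `(T', r')` is one less. A cover containing `r` is `r` together
with an arbitrary cover of `T' − S`, and the best cover of `T' − S` is the better of its best
type-0 and type-1 covers; for a disjoint union of two families, the minimum is the smaller
minimum and the minimizer is unique only if the two minima differ and the smaller one is attained
once.
-/

/-- `b` counts the minimizers of `f` on `P`, capped at `2`. -/
def IsMinMult {X : Type*} (P : X → Prop) (f : X → ℕ) (a b : ℕ) : Prop :=
  (∃ x, P x ∧ f x = a) ∧ (∀ x, P x → a ≤ f x) ∧ (b = 1 ∨ b = 2) ∧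
    (b = 1 ↔ ∃! x, P x ∧ f x = a)

namespace IsMinMult

variable {X : Type*} {P Q : X → Prop} {f : X → ℕ} {a b c d : ℕ}

theorem unique {a' b' : ℕ} (h : IsMinMult P f a b) (h' : IsMinMult P f a' b') :
    a = a' ∧ b = b' := by
  obtain ⟨⟨x, hx, rfl⟩, hmin, hb, hbu⟩ := h
  obtain ⟨⟨x', hx', rfl⟩, hmin', hb', hbu'⟩ := h'
  have ha : f x = f x' := (hmin x' hx').antisymm (hmin' x hx)
  refine ⟨ha, ?_⟩
  rw [← ha] at hbu'
  have hb1 : b = 1 ↔ b' = 1 := hbu.trans hbu'.symm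
  omega

theorem add_const (h : IsMinMult P f a b) (c : ℕ) :
    IsMinMult P (fun x => f x + c) (a + c) b := by
  obtain ⟨⟨x, hx, hfx⟩, hmin, hb, hbu⟩ := h
  refine ⟨⟨x, hx, congrArg (· + c) hfx⟩, fun y hy => by simpa using hmin y hy, hb, ?_⟩
  simpa only [Nat.add_right_cancel_iff] using hbu

theorem of_bijOn {Y : Type*} {R : Y → Prop} {g : Y → ℕ} {φ : X → Y}
    (hφ : Set.BijOn φ {x | P x} {y | R y})
    (hf : ∀ x, P x → f x = g (φ x)) (h : IsMinMult R g a b) : IsMinMult P f a b := by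
  obtain ⟨⟨y, hy, hgy⟩, hmin, hb, hbu⟩ := h
  obtain ⟨x, hx, rfl⟩ := hφ.surjOn hy
  refine ⟨⟨x, hx, (hf x hx).trans hgy⟩, fun x' hx' => (hf x' hx').symm ▸ hmin _ (hφ.mapsTo hx'),
    hb, hbu.trans ⟨?_, ?_⟩⟩
  · rintro ⟨y', ⟨hy', hgy'⟩, huniq⟩
    refine ⟨x, ⟨hx, (hf x hx).trans hgy⟩, fun x' ⟨hx', hfx'⟩ => hφ.injOn hx' hx ?_⟩
    rw [huniq _ ⟨hφ.mapsTo hx', (hf x' hx').symm.trans hfx'⟩, huniq _ ⟨hy, hgy⟩]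
  · rintro ⟨x', ⟨hx', hfx'⟩, huniq⟩
    refine ⟨φ x', ⟨hφ.mapsTo hx', (hf x' hx').symm.trans hfx'⟩, fun y' ⟨hy', hgy'⟩ => ?_⟩
    obtain ⟨x'', hx'', rfl⟩ := hφ.surjOn hy'
    rw [huniq x'' ⟨hx'', (hf x'' hx'').trans hgy'⟩]

theorem congr {P' : X → Prop} {f' : X → ℕ} (hP : ∀ x, P x ↔ P' x)
    (hf : ∀ x, P x → f x = f' x) (h : IsMinMult P f a b) : IsMinMult P' f' a b := by
  obtain rfl : P = P' := funext fun x => propext (hP x)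
  exact h.of_bijOn (Set.bijOn_id _) fun x hx => (hf x hx).symm

theorem or_of_lt (hP : IsMinMult P f a b) (hQ : ∀ x, Q x → c ≤ f x)
    (hac : a < c) : IsMinMult (fun x => P x ∨ Q x) f a b := by
  obtain ⟨⟨x, hx, hfx⟩, hmin, hb, hbu⟩ := hP
  have hPQ : ∀ y, (P y ∨ Q y) ∧ f y = a ↔ P y ∧ f y = a := fun y =>
    ⟨fun ⟨hy, hfy⟩ => ⟨hy.resolve_right fun hQy => by have := hQ y hQy; omega, hfy⟩,
      fun ⟨hy, hfy⟩ => ⟨Or.inl hy, hfy⟩⟩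
  refine ⟨⟨x, Or.inl hx, hfx⟩, ?_, hb, hbu.trans (existsUnique_congr hPQ).symm⟩
  rintro y (hy | hy)
  · exact hmin y hy
  · have := hQ y hy; omega

theorem or_of_eq (hPQ : ∀ x, ¬(P x ∧ Q x)) (hP : IsMinMult P f a b)
    (hQ : IsMinMult Q f a d) : IsMinMult (fun x => P x ∨ Q x) f a 2 := by
  obtain ⟨⟨x, hx, hfx⟩, hminP, -⟩ := hP
  obtain ⟨⟨y, hy, hfy⟩, hminQ, -⟩ := hQ
  refine ⟨⟨x, Or.inl hx, hfx⟩, ?_, Or.inr rfl, iff_of_false (by decide) ?_⟩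
  · rintro z (hz | hz)
    exacts [hminP z hz, hminQ z hz]
  · rintro ⟨z, -, huniq⟩
    have hxy : x = y := (huniq x ⟨Or.inl hx, hfx⟩).trans (huniq y ⟨Or.inr hy, hfy⟩).symm
    exact hPQ y ⟨hxy ▸ hx, hy⟩

theorem or (hPQ : ∀ x, ¬(P x ∧ Q x)) (hP : IsMinMult P f a b)
    (hQ : IsMinMult Q f c d) :
    IsMinMult (fun x => P x ∨ Q x) f (min a c) (if a < c then b else if c < a then d else 2) := by
  rcases lt_trichotomy a c with hac | rfl | hca
  · rw [if_pos hac, min_eq_left hac.le]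
    exact hP.or_of_lt hQ.2.1 hac
  · simpa using hP.or_of_eq hPQ hQ
  · rw [if_neg hca.not_gt, if_pos hca, min_eq_right hca.le]
    exact (hQ.or_of_lt hP.2.1 hca).congr (fun x => or_comm) fun _ _ => rfl

end IsMinMult

section Characteristic

variable [DecidableEq V] {T T' : SimpleGraph V} {A A' S M : Finset V} {r r' : V}
  {α β α' β' : Fin 2 → ℕ}

theorem IsCharacteristic.isMinMult (h : IsCharacteristic T A S r α β) (i : Fin 2) :
    IsMinMult (IsTypedVC T A S r i) (fun M => (M.erase r).card) (α i) (β i) :=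
  h i

theorem isVCDel_iff_isTypedVC :
    IsVCDel T A S M ↔ IsTypedVC T A S r 0 M ∨ IsTypedVC T A S r 1 M := by
  by_cases hr : r ∈ M <;> simp [IsTypedVC, hr]

/-- The reduced size of a type-1 cover does not count the root, hence the `+ 1`. -/
theorem IsCharacteristic.isMinMult_isVCDel (h : IsCharacteristic T A S r α β) :
    IsMinMult (IsVCDel T A S) card (min (α 0) (α 1 + 1))
      (if α 0 < α 1 + 1 then β 0 else if α 1 + 1 < α 0 then β 1 else 2) := by
  have h0 : IsMinMult (IsTypedVC T A S r 0) card (α 0) (β 0) :=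
    (h.isMinMult 0).congr (fun _ => Iff.rfl) fun M ⟨_, hr⟩ =>
      by rw [erase_eq_of_notMem fun h => absurd (hr.mpr h) (by decide)]
  have h1 : IsMinMult (IsTypedVC T A S r 1) card (α 1 + 1) (β 1) :=
    ((h.isMinMult 1).add_const 1).congr (fun _ => Iff.rfl) fun M ⟨_, hr⟩ =>
      card_erase_add_one (hr.mp rfl)
  refine (h0.or (fun M ⟨h0, h1⟩ => ?_) h1).congr (fun M => isVCDel_iff_isTypedVC.symm)
    fun _ _ => rfl
  exact absurd (h0.2.mpr (h1.2.mp rfl)) (by decide)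

theorem isTypedVC_sup_edge_zero_iff (hrA : r ∉ A') (hr'A : r' ∈ A') (hS : S ⊆ A'.erase r') :
    IsTypedVC (T' ⊔ SimpleGraph.edge r r') (insert r A') S r 0 M ↔ IsTypedVC T' A' S r' 1 M := by
  have hne : r ≠ r' := fun h => hrA (h ▸ hr'A)
  have hrS : r ∉ S := fun h => hrA (mem_of_mem_erase (hS h))
  have hr'S : r' ∉ S := fun h => notMem_erase r' A' (hS h)
  simp only [IsTypedVC, IsVCDel, SimpleGraph.sup_adj, SimpleGraph.edge_adj]
  constructor
  · rintro ⟨⟨hsub, hcov⟩, hrM⟩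
    have hrM : r ∉ M := by simpa using hrM
    have hr'M : r' ∈ M := (hcov (Or.inr ⟨Or.inl ⟨rfl, rfl⟩, hne⟩) hrS hr'S).resolve_left hrM
    refine ⟨⟨fun x hx => ?_, fun u v huv => hcov (Or.inl huv)⟩, by simpa using hr'M⟩
    have := hsub hx
    grind
  · rintro ⟨⟨hsub, hcov⟩, hr'M⟩
    have hr'M : r' ∈ M := by simpa using hr'M
    refine ⟨⟨fun x hx => ?_, ?_⟩, ?_⟩
    · have := hsub hx
      grind
    · rintro u v (huv | ⟨⟨rfl, rfl⟩ | ⟨rfl, rfl⟩, -⟩) hu hv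
      exacts [hcov huv hu hv, Or.inr hr'M, Or.inl hr'M]
    · simpa using fun h => hrA (mem_sdiff.mp (hsub h)).1

theorem isTypedVC_sup_edge_one_iff (hrA : r ∉ A') (hS : S ⊆ A'.erase r')
    (hT' : ∀ ⦃u v : V⦄, T'.Adj u v → u ∈ A' ∧ v ∈ A') :
    IsTypedVC (T' ⊔ SimpleGraph.edge r r') (insert r A') S r 1 M ↔
      r ∈ M ∧ IsVCDel T' A' S (M.erase r) := by
  have hrS : r ∉ S := fun h => hrA (mem_of_mem_erase (hS h))
  simp only [IsTypedVC, IsVCDel, SimpleGraph.sup_adj, SimpleGraph.edge_adj]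
  constructor
  · rintro ⟨⟨hsub, hcov⟩, hrM⟩
    refine ⟨by simpa using hrM, fun x hx => ?_, fun u v huv hu hv => ?_⟩
    · have := hsub (mem_of_mem_erase hx)
      grind
    · have := hT' huv
      have := hcov (Or.inl huv) hu hv
      grind
  · rintro ⟨hrM, hsub, hcov⟩
    refine ⟨⟨fun x hx => ?_, ?_⟩, by simpa using hrM⟩
    · by_cases hxr : x = r
      · grind
      · have := hsub (mem_erase.mpr ⟨hxr, hx⟩)
        grind
    · rintro u v (huv | ⟨⟨rfl, rfl⟩ | ⟨rfl, rfl⟩, -⟩) hu hv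
      · rcases hcov huv hu hv with h | h
        exacts [Or.inl (mem_of_mem_erase h), Or.inr (mem_of_mem_erase h)]
      exacts [Or.inl hrM, Or.inr hrM]

theorem IsCharacteristic.isMinMult_sup_edge_zero (h' : IsCharacteristic T' A' S r' α' β')
    (hrA : r ∉ A') (hr'A : r' ∈ A') (hS : S ⊆ A'.erase r') :
    IsMinMult (IsTypedVC (T' ⊔ SimpleGraph.edge r r') (insert r A') S r 0)
      (fun M => (M.erase r).card) (α' 1 + 1) (β' 1) := by
  refine ((h'.isMinMult 1).add_const 1).congr
    (fun M => (isTypedVC_sup_edge_zero_iff hrA hr'A hS).symm) fun M ⟨⟨hsub, _⟩, hr'M⟩ => ?_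
  rw [erase_eq_of_notMem fun h => hrA (mem_sdiff.mp (hsub h)).1]
  exact card_erase_add_one (hr'M.mp rfl)

theorem IsCharacteristic.isMinMult_sup_edge_one (h' : IsCharacteristic T' A' S r' α' β')
    (hrA : r ∉ A') (hS : S ⊆ A'.erase r')
    (hT' : ∀ ⦃u v : V⦄, T'.Adj u v → u ∈ A' ∧ v ∈ A') :
    IsMinMult (IsTypedVC (T' ⊔ SimpleGraph.edge r r') (insert r A') S r 1)
      (fun M => (M.erase r).card) (min (α' 0) (α' 1 + 1))
      (if α' 0 < α' 1 + 1 then β' 0 else if α' 1 + 1 < α' 0 then β' 1 else 2) := by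
  have hiff := fun M => isTypedVC_sup_edge_one_iff (M := M) hrA hS hT'
  refine h'.isMinMult_isVCDel.of_bijOn (Set.InvOn.bijOn (f' := insert r) ⟨?_, ?_⟩ ?_ ?_)
    fun _ _ => rfl
  · exact fun M hM => insert_erase ((hiff M).mp hM).1
  · exact fun N hN => erase_insert fun h => hrA (mem_sdiff.mp (hN.1 h)).1
  · exact fun M hM => ((hiff M).mp hM).2
  · intro N hN
    refine (hiff _).mpr ⟨mem_insert_self r N, ?_⟩
    rwa [erase_insert fun h => hrA (mem_sdiff.mp (hN.1 h)).1]

end Characteristic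

theorem char_extend_id_general [DecidableEq V]
    (T' : SimpleGraph V) (A' : Finset V) (r' : V) (hT' : IsRootedTree T' A' r')
    (r : V) (hr : r ∉ A')
    (S : Finset V) (hS : S ⊆ A'.erase r')
    (α' β' α β : Fin 2 → ℕ)
    (h' : IsCharacteristic T' A' S r' α' β')
    (h : IsCharacteristic (T' ⊔ SimpleGraph.fromEdgeSet {s(r, r')})
          (insert r A') S r α β) :
    α 0 = α' 1 + 1 ∧
    α 1 = min (α' 0) (α' 1 + 1) ∧
    β 0 = β' 1 ∧
    (α' 0 < α' 1 + 1 → β 1 = β' 0) ∧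
    (α' 1 + 1 < α' 0 → β 1 = β' 1) ∧
    (α' 0 = α' 1 + 1 → β 1 = 2) := by
  obtain ⟨hr'A, hT'A, -⟩ := hT'
  obtain ⟨hα0, hβ0⟩ := (h.isMinMult 0).unique (h'.isMinMult_sup_edge_zero hr hr'A hS)
  obtain ⟨hα1, hβ1⟩ := (h.isMinMult 1).unique (h'.isMinMult_sup_edge_one hr hS hT'A)
  refine ⟨hα0, hα1, hβ0, fun hlt => ?_, fun hlt => ?_, fun heq => ?_⟩ <;> rw [hβ1]
  · rw [if_pos hlt]
  · rw [if_neg hlt.not_gt, if_pos hlt]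
  · rw [if_neg heq.not_lt, if_neg heq.not_gt]

/-- Extend operation: the characteristic of `S` in the tree obtained from
`(T', r')` by adding a new root `r` joined to `r'` by an edge. -/
theorem char_extend_id [Fintype V] [DecidableEq V]
    (T' : SimpleGraph V) (A' : Finset V) (r' : V) (hT' : IsRootedTree T' A' r')
    (r : V) (hr : r ∉ A')
    (S : Finset V) (hS : S ⊆ A'.erase r')
    (α' β' α β : Fin 2 → ℕ)
    (h' : IsCharacteristic T' A' S r' α' β')
    (h : IsCharacteristic (T' ⊔ SimpleGraph.fromEdgeSet {s(r, r')})
          (insert r A') S r α β) :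
    α 0 = α' 1 + 1 ∧
    α 1 = min (α' 0) (α' 1 + 1) ∧
    β 0 = β' 1 ∧
    (α' 0 < α' 1 + 1 → β 1 = β' 0) ∧
    (α' 1 + 1 < α' 0 → β 1 = β' 1) ∧
    (α' 0 = α' 1 + 1 → β 1 = 2) :=
  char_extend_id_general T' A' r' hT' r hr S hS α' β' α β h' h
end

section
/- Let (T', r') be a finite rooted tree, let r ∉ V(T'), and let T be the tree obtained from T' by adding the new vertex r and the edge {r, r'}, rooted at r. Let S ⊆ V(T') ∖ {r'} have characteristic (α', β') in (T', r'). Then the characteristic (α, β) of S ∪ {r'} in (T, r) satisfies α(0) = α(1) = α'(1) and β(0) = β(1) = β'(1). -/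
open Finset

variable {V : Type*}

/-! In `T − (S ∪ {r'})` the new root `r` is isolated, since its only neighbour `r'` is deleted.
So `r` may be put into a cover or left out at no cost, and removing it gives the covers of
`T' − (S ∪ {r'})`; these in turn are, after adding `r'`, exactly the covers of `T' − S`
containing `r'`. Both bijections preserve reduced size, so both entries of the characteristic
of `S ∪ {r'}` in `(T, r)` coincide with the type-1 entry of the characteristic of `S`. -/

/-- `IsCharacteristic T A S r α β` unfolds to
`∀ i, IsCharEntry (IsTypedVC T A S r i) (fun M => (M.erase r).card) (α i) (β i)`. -/
def IsCharEntry {α : Type*} (P : α → Prop) (f : α → ℕ) (a b : ℕ) : Prop :=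
  (∃ x, P x ∧ f x = a) ∧ (∀ x, P x → a ≤ f x) ∧ (b = 1 ∨ b = 2) ∧
    (b = 1 ↔ ∃! x, P x ∧ f x = a)

theorem IsCharEntry.eq_of_equiv {α β : Type*} {P : α → Prop} {Q : β → Prop}
    {f : α → ℕ} {g : β → ℕ} {a b a' b' : ℕ}
    (h : IsCharEntry P f a b) (h' : IsCharEntry Q g a' b')
    (e : {x // P x} ≃ {y // Q y}) (he : ∀ x, g (e x) = f x) : a = a' ∧ b = b' := by
  obtain ⟨⟨x, hx, rfl⟩, hmin, hb, hbu⟩ := h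
  obtain ⟨⟨y, hy, rfl⟩, hmin', hb', hbu'⟩ := h'
  have ha : f x = g y := by
    refine le_antisymm ?_ ?_
    · calc f x ≤ f (e.symm ⟨y, hy⟩) := hmin _ (e.symm ⟨y, hy⟩).2
        _ = g y := by rw [← he, e.apply_symm_apply]
    · calc g y ≤ g (e ⟨x, hx⟩) := hmin' _ (e ⟨x, hx⟩).2
        _ = f x := he _
  have hunique : (∃! x', P x' ∧ f x' = f x) ↔ ∃! y', Q y' ∧ g y' = g y := by
    rw [← ha]
    exact Equiv.existsUnique_subtype_congr
      ((Equiv.subtypeSubtypeEquivSubtypeInter P (f · = f x)).symm.trans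
        ((e.subtypeEquiv fun x' => by rw [he]).trans
          (Equiv.subtypeSubtypeEquivSubtypeInter Q (g · = f x))))
  refine ⟨ha, ?_⟩
  have hb_iff := hbu.trans (hunique.trans hbu'.symm)
  omega

section VertexCover

variable [DecidableEq V] {T : SimpleGraph V} {A S M : Finset V}

theorem isVCDel_sup_edge_iff {u w : V} (hw : w ∈ S) :
    IsVCDel (T ⊔ SimpleGraph.fromEdgeSet {s(u, w)}) A S M ↔ IsVCDel T A S M := by
  refine and_congr_right fun _ => ⟨fun hcov x y hxy => hcov (Or.inl hxy), ?_⟩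
  intro hcov x y hxy hx hy
  rcases hxy with hxy | ⟨hxy, -⟩
  · exact hcov hxy hx hy
  · rcases Sym2.eq_iff.mp hxy with ⟨-, rfl⟩ | ⟨rfl, -⟩
    · exact absurd hw hy
    · exact absurd hw hx

theorem isVCDel_insert_isolated_iff {r : V} (hrS : r ∉ S) (hiso : ∀ u, ¬T.Adj r u) :
    IsVCDel T (insert r A) S M ↔ IsVCDel T A S (M.erase r) := by
  have hne : ∀ ⦃u v⦄, T.Adj u v → u ≠ r := fun u v huv hur => hiso v (hur ▸ huv)
  constructor
  · rintro ⟨hsub, hcov⟩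
    refine ⟨fun x hx => ?_, fun u v huv hu hv => ?_⟩
    · obtain ⟨hxr, hxM⟩ := mem_erase.mp hx
      obtain ⟨hxA, hxS⟩ := mem_sdiff.mp (hsub hxM)
      exact mem_sdiff.mpr ⟨(mem_insert.mp hxA).resolve_left hxr, hxS⟩
    · rcases hcov huv hu hv with h | h
      · exact Or.inl (mem_erase.mpr ⟨hne huv, h⟩)
      · exact Or.inr (mem_erase.mpr ⟨hne huv.symm, h⟩)
  · rintro ⟨hsub, hcov⟩
    refine ⟨fun x hx => ?_, fun u v huv hu hv => ?_⟩
    · by_cases hxr : x = r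
      · subst hxr
        exact mem_sdiff.mpr ⟨mem_insert_self _ _, hrS⟩
      · exact sdiff_subset_sdiff (subset_insert _ _) le_rfl (hsub (mem_erase.mpr ⟨hxr, hx⟩))
    · exact (hcov huv hu hv).imp mem_of_mem_erase mem_of_mem_erase

theorem isVCDel_insert_iff {v : V} (hv : v ∈ A \ S) (hvM : v ∉ M) :
    IsVCDel T A S (insert v M) ↔ IsVCDel T A (insert v S) M := by
  constructor
  · rintro ⟨hsub, hcov⟩
    refine ⟨fun x hx => ?_, fun u w huw hu hw => ?_⟩
    · obtain ⟨hxA, hxS⟩ := mem_sdiff.mp (hsub (mem_insert_of_mem hx))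
      have hxv : x ≠ v := fun hxv => hvM (hxv ▸ hx)
      exact mem_sdiff.mpr ⟨hxA, by simp [hxv, hxS]⟩
    · rw [mem_insert, not_or] at hu hw
      rcases hcov huw hu.2 hw.2 with h | h
      · exact Or.inl ((mem_insert.mp h).resolve_left hu.1)
      · exact Or.inr ((mem_insert.mp h).resolve_left hw.1)
  · rintro ⟨hsub, hcov⟩
    refine ⟨insert_subset hv fun x hx => ?_, fun u w huw hu hw => ?_⟩
    · exact sdiff_subset_sdiff le_rfl (subset_insert _ _) (hsub hx)
    · by_cases hu' : u = v
      · exact Or.inl (hu' ▸ mem_insert_self _ _)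
      by_cases hw' : w = v
      · exact Or.inr (hw' ▸ mem_insert_self _ _)
      exact (hcov huw (by simp [hu', hu]) (by simp [hw', hw])).imp
        mem_insert_of_mem mem_insert_of_mem

theorem IsVCDel.notMem_of_notMem {x : V} (hM : IsVCDel T A S M) (hx : x ∉ A) : x ∉ M :=
  fun h => hx (mem_sdiff.mp (hM.1 h)).1

theorem IsVCDel.notMem_of_mem {x : V} (hM : IsVCDel T A S M) (hx : x ∈ S) : x ∉ M :=
  fun h => (mem_sdiff.mp (hM.1 h)).2 hx

def typedVCEquivOfIsolated {r : V} (hrA : r ∉ A) (hrS : r ∉ S) (hiso : ∀ u, ¬T.Adj r u)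
    (i : Fin 2) : {M // IsTypedVC T (insert r A) S r i M} ≃ {K // IsVCDel T A S K} where
  toFun M := ⟨M.1.erase r, (isVCDel_insert_isolated_iff hrS hiso).mp M.2.1⟩
  invFun K :=
    have hrK := K.2.notMem_of_notMem hrA
    if hi : i = 1 then
      ⟨insert r K.1, by
        rw [IsTypedVC, isVCDel_insert_isolated_iff hrS hiso, erase_insert hrK]
        simpa [hi] using K.2⟩
    else
      ⟨K.1, by
        rw [IsTypedVC, isVCDel_insert_isolated_iff hrS hiso, erase_eq_of_notMem hrK]
        simpa [hi, hrK] using K.2⟩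
  left_inv M := by
    obtain ⟨M, -, hi⟩ := M
    by_cases h : i = 1
    · simp [h, insert_erase (hi.mp h)]
    · simp [h, erase_eq_of_notMem (mt hi.mpr h)]
  right_inv K := by
    have hrK := K.2.notMem_of_notMem hrA
    by_cases h : i = 1 <;> simp [h, erase_insert hrK, erase_eq_of_notMem hrK]

def typedVCOneEquiv {v : V} (hv : v ∈ A \ S) :
    {N // IsTypedVC T A S v 1 N} ≃ {K // IsVCDel T A (insert v S) K} where
  toFun N := ⟨N.1.erase v, by
    rw [← isVCDel_insert_iff hv (notMem_erase v _), insert_erase (N.2.2.mp rfl)]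
    exact N.2.1⟩
  invFun K :=
    ⟨insert v K.1, (isVCDel_insert_iff hv (K.2.notMem_of_mem (mem_insert_self v S))).mpr K.2,
      by simp⟩
  left_inv N := Subtype.ext (insert_erase (N.2.2.mp rfl))
  right_inv K := Subtype.ext (erase_insert (K.2.notMem_of_mem (mem_insert_self v S)))

theorem erase_typedVCOneEquiv_symm {v : V} (hv : v ∈ A \ S)
    (K : {K // IsVCDel T A (insert v S) K}) :
    ((typedVCOneEquiv hv).symm K).1.erase v = K.1 :=
  congrArg Subtype.val ((typedVCOneEquiv hv).apply_symm_apply K)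

end VertexCover

theorem char_extend_plus_general [DecidableEq V]
    (T' : SimpleGraph V) (A' : Finset V) (r' : V) (hT' : IsRootedTree T' A' r')
    (r : V) (hr : r ∉ A')
    (S : Finset V) (hS : S ⊆ A'.erase r')
    (α' β' α β : Fin 2 → ℕ)
    (h' : IsCharacteristic T' A' S r' α' β')
    (h : IsCharacteristic (T' ⊔ SimpleGraph.fromEdgeSet {s(r, r')})
          (insert r A') (insert r' S) r α β) :
    α 0 = α' 1 ∧ α 1 = α' 1 ∧ β 0 = β' 1 ∧ β 1 = β' 1 := by
  obtain ⟨hr'A, hedge, -⟩ := hT'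
  have hr' : r' ∈ A' \ S := mem_sdiff.mpr ⟨hr'A, fun h => (mem_erase.mp (hS h)).1 rfl⟩
  have hrS : r ∉ insert r' S := by
    rw [mem_insert, not_or]
    exact ⟨fun h => hr (h ▸ hr'A), fun h => hr (mem_of_mem_erase (hS h))⟩
  have hiso : ∀ u, ¬T'.Adj r u := fun u h => hr (hedge h).1
  have key : ∀ i, α i = α' 1 ∧ β i = β' 1 := fun i =>
    IsCharEntry.eq_of_equiv (h i) (h' 1)
      ((Equiv.subtypeEquivRight fun _ =>
          and_congr_left' (isVCDel_sup_edge_iff (mem_insert_self r' S))).trans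
        ((typedVCEquivOfIsolated hr hrS hiso i).trans (typedVCOneEquiv hr').symm))
      fun _ => congrArg card (erase_typedVCOneEquiv_symm hr' _)
  exact ⟨(key 0).1, (key 1).1, (key 0).2, (key 1).2⟩

/-- Extend operation, adding the old root `r'` to the deleted set: the
characteristic of `S ∪ {r'}` in the tree obtained from `(T', r')` by adding a
new root `r` joined to `r'` by an edge. -/
theorem char_extend_plus [Fintype V] [DecidableEq V]
    (T' : SimpleGraph V) (A' : Finset V) (r' : V) (hT' : IsRootedTree T' A' r')
    (r : V) (hr : r ∉ A')
    (S : Finset V) (hS : S ⊆ A'.erase r')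
    (α' β' α β : Fin 2 → ℕ)
    (h' : IsCharacteristic T' A' S r' α' β')
    (h : IsCharacteristic (T' ⊔ SimpleGraph.fromEdgeSet {s(r, r')})
          (insert r A') (insert r' S) r α β) :
    α 0 = α' 1 ∧ α 1 = α' 1 ∧ β 0 = β' 1 ∧ β 1 = β' 1 :=
  char_extend_plus_general T' A' r' hT' r hr S hS α' β' α β h' h
end
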